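/- Let A, B > 0 be constants, set ξ̂ := (3B/(2A))^{1/3} and h := (A/2)·ξ̂². Define ϖ(ξ) = -ξ⁴/(8ξ̂³) + 3ξ²/(4ξ̂) for |ξ| ≤ ξ̂ and ϖ(ξ) = |ξ| - 3ξ̂/8 otherwise. Then for every ξ ∈ ℝ, max{ -(A/2)ξ² + h - (B/2)ϖ''(ξ), -1 + ϖ'(ξ), -1 - ϖ'(ξ) } = 0. -/

import Mathlib

/-!
The pieces of `ϖ` match to second order at `±ξ̂`, so `ϖ'` and `ϖ''` are computed piecewise.
On `[-ξ̂, ξ̂]` the choice `ξ̂³ = 3B/(2A)` makes the second-order equation hold exactly while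
`|ϖ'| ≤ 1`; outside, `ϖ' = ±1`, `ϖ'' = 0` and `(A/2)ξ² ≥ (A/2)ξ̂² = h`.
-/

open Set Filter Topology

lemma HasDerivAt.of_eventuallyEq_nhdsLE_nhdsGE {f g k : ℝ → ℝ} {d a : ℝ}
    (hg : HasDerivAt g d a) (hk : HasDerivAt k d a)
    (hfg : f =ᶠ[𝓝[≤] a] g) (hfk : f =ᶠ[𝓝[≥] a] k) : HasDerivAt f d a := by
  have hle : HasDerivWithinAt f d (Iic a) a :=
    hg.hasDerivWithinAt.congr_of_eventuallyEq_of_mem hfg self_mem_Iic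
  have hge : HasDerivWithinAt f d (Ici a) a :=
    hk.hasDerivWithinAt.congr_of_eventuallyEq_of_mem hfk self_mem_Ici
  simpa only [Iic_union_Ici, hasDerivWithinAt_univ] using hle.union hge

def EqOnAbsPieces (c : ℝ) (f p q r : ℝ → ℝ) : Prop :=
  EqOn f p (Icc (-c) c) ∧ EqOn f q (Ici c) ∧ EqOn f r (Iic (-c))

lemma EqOnAbsPieces.deriv {c : ℝ} {f p q r p' q' r' : ℝ → ℝ} (hc : 0 < c)
    (hf : EqOnAbsPieces c f p q r) (hp : ∀ x, HasDerivAt p (p' x) x)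
    (hq : ∀ x, HasDerivAt q (q' x) x) (hr : ∀ x, HasDerivAt r (r' x) x)
    (hpq : p' c = q' c) (hpr : p' (-c) = r' (-c)) :
    EqOnAbsPieces c (deriv f) p' q' r' := by
  obtain ⟨hfp, hfq, hfr⟩ := hf
  have hneg : -c < c := by linarith
  have at_right : HasDerivAt f (q' c) c :=
    HasDerivAt.of_eventuallyEq_nhdsLE_nhdsGE (hpq ▸ hp c) (hq c)
      (eventuallyEq_of_mem (Icc_mem_nhdsLE hneg) hfp)
      (eventuallyEq_of_mem self_mem_nhdsWithin hfq)
  have at_left : HasDerivAt f (r' (-c)) (-c) :=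
    HasDerivAt.of_eventuallyEq_nhdsLE_nhdsGE (hr (-c)) (hpr ▸ hp (-c))
      (eventuallyEq_of_mem self_mem_nhdsWithin hfr)
      (eventuallyEq_of_mem (Icc_mem_nhdsGE hneg) hfp)
  refine ⟨fun x hx => ?_, fun x hx => ?_, fun x hx => ?_⟩
  · rcases hx.1.eq_or_lt with rfl | hx₁
    · exact hpr ▸ at_left.deriv
    rcases hx.2.eq_or_lt with rfl | hx₂
    · exact hpq ▸ at_right.deriv
    exact ((hp x).congr_of_eventuallyEq
      (eventuallyEq_of_mem (Ioo_mem_nhds hx₁ hx₂) (hfp.mono Ioo_subset_Icc_self))).deriv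
  · rcases (mem_Ici.mp hx).eq_or_lt with rfl | hx
    · exact at_right.deriv
    exact ((hq x).congr_of_eventuallyEq
      (eventuallyEq_of_mem (Ioi_mem_nhds hx) (hfq.mono Ioi_subset_Ici_self))).deriv
  · rcases (mem_Iic.mp hx).eq_or_lt with rfl | hx
    · exact at_left.deriv
    exact ((hr x).congr_of_eventuallyEq
      (eventuallyEq_of_mem (Iio_mem_nhds hx) (hfr.mono Iio_subset_Iic_self))).deriv

lemma max_max_neg_one_add_neg_one_sub (a d : ℝ) :
    max (max a (-1 + d)) (-1 - d) = max a (|d| - 1) := by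
  rw [max_assoc, abs_eq_max_neg, ← max_sub_sub_right]
  congr 2 <;> ring

section Corrector

variable (c : ℝ)

lemma hasDerivAt_corrector_inner (x : ℝ) :
    HasDerivAt (fun x => -x ^ 4 / (8 * c ^ 3) + 3 * x ^ 2 / (4 * c))
      (-x ^ 3 / (2 * c ^ 3) + 3 * x / (2 * c)) x := by
  have := ((hasDerivAt_pow 4 x).neg.div_const (8 * c ^ 3)).add
    (((hasDerivAt_pow 2 x).const_mul 3).div_const (4 * c))
  exact this.congr_deriv (by norm_num; ring)

lemma hasDerivAt_corrector_inner_deriv (x : ℝ) :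
    HasDerivAt (fun x => -x ^ 3 / (2 * c ^ 3) + 3 * x / (2 * c))
      (-3 * x ^ 2 / (2 * c ^ 3) + 3 / (2 * c)) x := by
  have := ((hasDerivAt_pow 3 x).neg.div_const (2 * c ^ 3)).add
    (((hasDerivAt_id x).const_mul 3).div_const (2 * c))
  exact this.congr_deriv (by norm_num)

variable {c}

/-- `1 ∓ ϖ'(x) = (c ∓ x)² (2c ± x) / (2c³)`. -/
lemma abs_corrector_inner_deriv_le_one (hc : 0 < c) {x : ℝ} (hx : |x| ≤ c) :
    |-x ^ 3 / (2 * c ^ 3) + 3 * x / (2 * c)| ≤ 1 := by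
  obtain ⟨hx₁, hx₂⟩ := abs_le.mp hx
  have hc3 : 0 < 2 * c ^ 3 := by positivity
  have key : -x ^ 3 / (2 * c ^ 3) + 3 * x / (2 * c) = (3 * x * c ^ 2 - x ^ 3) / (2 * c ^ 3) := by
    field_simp
    ring
  rw [key, abs_le, le_div_iff₀ hc3, div_le_iff₀ hc3]
  constructor
  · nlinarith [mul_nonneg (sq_nonneg (c + x)) (by linarith : 0 ≤ 2 * c - x)]
  · nlinarith [mul_nonneg (sq_nonneg (c - x)) (by linarith : 0 ≤ 2 * c + x)]

lemma corrector_inner_second_order_eq (hc : c ≠ 0) {A B : ℝ} (hcube : 2 * A * c ^ 3 = 3 * B)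
    (x : ℝ) :
    -(A / 2) * x ^ 2 + A / 2 * c ^ 2 - B / 2 * (-3 * x ^ 2 / (2 * c ^ 3) + 3 / (2 * c)) = 0 := by
  field_simp
  linear_combination (c ^ 2 - x ^ 2) * hcube

end Corrector

theorem stmt3 (A B : ℝ) (hA : 0 < A) (hB : 0 < B) (ξh h : ℝ)
    (hξh : ξh = (3*B/(2*A)) ^ ((1:ℝ)/3)) (hh : h = A/2*ξh^2)
    (ϖ : ℝ → ℝ)
    (hmid : ∀ ξ : ℝ, |ξ| ≤ ξh → ϖ ξ = -ξ^4/(8*ξh^3) + 3*ξ^2/(4*ξh))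
    (hout : ∀ ξ : ℝ, ξh ≤ |ξ| → ϖ ξ = |ξ| - 3*ξh/8) :
    ∀ ξ : ℝ,
      max (max (-(A/2)*ξ^2 + h - B/2 * deriv (deriv ϖ) ξ)
        (-1 + deriv ϖ ξ)) (-1 - deriv ϖ ξ) = 0 := by
  have hpos : 0 < ξh := hξh ▸ by positivity
  have hcube : 2 * A * ξh ^ 3 = 3 * B := by
    rw [hξh, ← Real.rpow_natCast, ← Real.rpow_mul (by positivity)]
    norm_num
    field_simp
  have hϖ : EqOnAbsPieces ξh ϖ (fun x => -x ^ 4 / (8 * ξh ^ 3) + 3 * x ^ 2 / (4 * ξh))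
      (fun x => x - 3 * ξh / 8) (fun x => -x - 3 * ξh / 8) :=
    ⟨fun x hx => hmid x (abs_le.mpr hx),
      fun x hx => by
        rw [hout x ((le_abs_self x).trans' hx), abs_of_nonneg (hpos.le.trans hx)],
      fun x hx => by
        rw [hout x ((le_neg.mp hx).trans (neg_le_abs x)),
          abs_of_nonpos (by linarith [mem_Iic.mp hx])]⟩
  have hϖ' := hϖ.deriv hpos (hasDerivAt_corrector_inner ξh)
    (fun x => (hasDerivAt_id x).sub_const _) (fun x => (hasDerivAt_neg x).sub_const _)
    (by field_simp; ring) (by field_simp; ring)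
  have hϖ'' := hϖ'.deriv hpos (hasDerivAt_corrector_inner_deriv ξh)
    (fun x => hasDerivAt_const x 1) (fun x => hasDerivAt_const x (-1))
    (by field_simp; ring) (by field_simp; ring)
  intro ξ
  rw [max_max_neg_one_add_neg_one_sub]
  by_cases hξ : |ξ| ≤ ξh
  · have hint := abs_le.mp hξ
    rw [hϖ''.1 hint, hϖ'.1 hint, hh, corrector_inner_second_order_eq hpos.ne' hcube]
    exact max_eq_left (by linarith [abs_corrector_inner_deriv_le_one hpos hξ])
  · have hξ' : ξh < |ξ| := not_le.mp hξ
    obtain ⟨hd, hdd⟩ : |deriv ϖ ξ| = 1 ∧ deriv (deriv ϖ) ξ = 0 := by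
      rcases le_abs'.mp hξ'.le with hξ | hξ
      · exact ⟨by rw [hϖ'.2.2 hξ, abs_neg, abs_one], hϖ''.2.2 hξ⟩
      · exact ⟨by rw [hϖ'.2.1 hξ, abs_one], hϖ''.2.1 hξ⟩
    have hsq : ξh ^ 2 < ξ ^ 2 := sq_lt_sq.mpr (by rwa [abs_of_pos hpos])
    rw [hd, hdd, hh, sub_self]
    exact max_eq_right (by nlinarith)
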